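/- arXiv:2003.06866 — 2 statements merged into one kernel-verified Lean document; each statement's English description precedes it below -/
import Mathlib

section
/- For p ≥ 1 and i = 0: if K, L are star bodies in R^n, then B(K +̌_p L)^{-p/n} ≥ B(K)^{-p/n} + B(L)^{-p/n}, where B(K) = (1/n)∫_{S^{n-1}} d(K,u)^n dS(u), with equality if and only if K and L have similar chord. -/
open MeasureTheory Metric Filter Set

noncomputable section

/-- A star body in `ℝⁿ`: a compact set, star-shaped about the origin, whose radial
function (recorded on the unit sphere) is positive and continuous. -/
structure StarBody (n : ℕ) where
  carrier : Set (EuclideanSpace ℝ (Fin n))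
  radial : sphere (0 : EuclideanSpace ℝ (Fin n)) 1 → ℝ
  radial_pos : ∀ u, 0 < radial u
  radial_continuous : Continuous radial
  isCompact : IsCompact carrier
  mem_iff : ∀ x, x ∈ carrier ↔ x = 0 ∨
    ∃ (u : sphere (0 : EuclideanSpace ℝ (Fin n)) 1) (c : ℝ),
      0 ≤ c ∧ c ≤ radial u ∧ x = c • (u : EuclideanSpace ℝ (Fin n))

/-- The half chord `d(K,u) = (ρ(K,u) + ρ(K,-u))/2` of a star body in direction `u`. -/
def StarBody.chord {n : ℕ} (K : StarBody n) (u : sphere (0 : EuclideanSpace ℝ (Fin n)) 1) : ℝ :=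
  (K.radial u + K.radial (-u)) / 2

/-- Spherical (surface-type) measure on the unit sphere of `ℝⁿ`. -/
def sphereMeasure (n : ℕ) : Measure (sphere (0 : EuclideanSpace ℝ (Fin n)) 1) :=
  (volume : Measure (EuclideanSpace ℝ (Fin n))).toSphere

/-- The chord integral `B_i(K) = (1/n) ∫_{S^{n-1}} d(K,u)^{n-i} dS(u)`. -/
def chordIntegral (n i : ℕ) (K : StarBody n) : ℝ :=
  (1 / (n : ℝ)) * ∫ u, K.chord u ^ ((n : ℝ) - i) ∂(sphereMeasure n)

/-- `K` and `L` have similar chord: `d(K,·) = λ d(L,·)` for some `λ > 0`. -/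
def SimilarChord {n : ℕ} (K L : StarBody n) : Prop :=
  ∃ lam : ℝ, 0 < lam ∧ ∀ u, K.chord u = lam * L.chord u

/-!
With `F = d(K,·)^{-p}` and `t = -n/p < 0`, `B(K)^{-p/n}` is, up to the factor `n^{p/n}`, the power
mean `(∫ F^t)^{1/t}` over the sphere, and `d(K +̌_p L,·)^{-p} = F + G`. So the theorem is the
reverse Minkowski inequality for power means of negative order. Normalising `F` and `G` by their
power means `a` and `b`, the point `(F + G)/(a + b)` is a convex combination of `F/a` and `G/b`;
integrating the convexity of `x ↦ x^t` gives `∫ (F + G)^t ≤ (a + b)^t`, and strict convexity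
forces `F/a = G/b` in the equality case.
-/

open Real

theorem strictConvexOn_rpow_of_neg {t : ℝ} (ht : t < 0) :
    StrictConvexOn ℝ (Ioi 0) fun x : ℝ ↦ x ^ t := by
  apply StrictMonoOn.strictConvexOn_of_deriv (convex_Ioi 0)
  · exact continuousOn_id.rpow_const fun x hx ↦ Or.inl (ne_of_gt hx)
  · rw [interior_Ioi]
    intro x hx y _ hxy
    simp only [Real.deriv_rpow_const]
    exact mul_lt_mul_of_neg_left (rpow_lt_rpow_of_neg hx hxy (by linarith)) ht

theorem rpow_add_div_add_le_and_eq_iff {t : ℝ} (ht : t < 0) {a b x y : ℝ} (ha : 0 < a) (hb : 0 < b)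
    (hx : 0 < x) (hy : 0 < y) :
    ((x + y) / (a + b)) ^ t ≤ a / (a + b) * (x / a) ^ t + b / (a + b) * (y / b) ^ t ∧
      (((x + y) / (a + b)) ^ t = a / (a + b) * (x / a) ^ t + b / (a + b) * (y / b) ^ t ↔
        x / a = y / b) := by
  have hab : 0 < a + b := add_pos ha hb
  have hsum : a / (a + b) + b / (a + b) = 1 := by field_simp
  have hmid : a / (a + b) * (x / a) + b / (a + b) * (y / b) = (x + y) / (a + b) := by
    field_simp
  have hxa : x / a ∈ Ioi (0 : ℝ) := div_pos hx ha
  have hyb : y / b ∈ Ioi (0 : ℝ) := div_pos hy hb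
  have hconv := strictConvexOn_rpow_of_neg ht
  refine ⟨?_, ⟨fun heq ↦ ?_, fun heq ↦ ?_⟩⟩
  · simpa only [smul_eq_mul, hmid] using
      hconv.convexOn.2 hxa hyb (div_pos ha hab).le (div_pos hb hab).le hsum
  · by_contra hne
    have := hconv.2 hxa hyb hne (div_pos ha hab) (div_pos hb hab) hsum
    simp only [smul_eq_mul, hmid] at this
    exact this.ne heq
  · rw [← hmid, heq, ← add_mul, ← add_mul, hsum, one_mul, one_mul]

section PowerMean

variable {X : Type*} [MeasurableSpace X]

def powerMean (μ : Measure X) (t : ℝ) (F : X → ℝ) : ℝ :=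
  (∫ x, F x ^ t ∂μ) ^ t⁻¹

theorem powerMean_const_mul (μ : Measure X) {t : ℝ} (ht : t ≠ 0) {F : X → ℝ}
    (hF : ∀ x, 0 ≤ F x) {c : ℝ} (hc : 0 ≤ c) :
    powerMean μ t (fun x ↦ c * F x) = c * powerMean μ t F := by
  simp only [powerMean, mul_rpow hc (hF _), integral_const_mul]
  rw [mul_rpow (rpow_nonneg hc t) (integral_nonneg fun x ↦ rpow_nonneg (hF x) t),
    rpow_rpow_inv hc ht]

variable [TopologicalSpace X] [CompactSpace X] [OpensMeasurableSpace X]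
  {μ : Measure X} [IsFiniteMeasure μ]

theorem Continuous.integrable_of_compactSpace {f : X → ℝ} (hf : Continuous f) :
    Integrable f μ :=
  hf.integrable_of_hasCompactSupport (HasCompactSupport.of_compactSpace f)

variable [μ.IsOpenPosMeasure]

theorem Continuous.integral_eq_integral_iff_of_le {f g : X → ℝ} (hf : Continuous f)
    (hg : Continuous g) (hfg : ∀ x, f x ≤ g x) :
    ∫ x, f x ∂μ = ∫ x, g x ∂μ ↔ f = g :=
  (integral_eq_iff_of_ae_le hf.integrable_of_compactSpace hg.integrable_of_compactSpace
    (ae_of_all μ hfg)).trans (hf.ae_eq_iff_eq μ hg)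

variable [Nonempty X] {t : ℝ} {F G : X → ℝ}

theorem integral_rpow_pos (hF : Continuous F) (hF0 : ∀ x, 0 < F x) (t : ℝ) :
    0 < ∫ x, F x ^ t ∂μ := by
  have hFt : Continuous fun x ↦ F x ^ t := hF.rpow_const fun x ↦ Or.inl (hF0 x).ne'
  exact integral_pos_of_integrable_nonneg_nonzero (x := Classical.arbitrary X) hFt
    hFt.integrable_of_compactSpace (fun x ↦ (rpow_pos_of_pos (hF0 x) t).le)
    (rpow_pos_of_pos (hF0 _) t).ne'

theorem powerMean_pos (hF : Continuous F) (hF0 : ∀ x, 0 < F x) : 0 < powerMean μ t F :=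
  rpow_pos_of_pos (integral_rpow_pos hF hF0 t) _

theorem integral_div_powerMean_rpow (ht : t ≠ 0) (hF : Continuous F) (hF0 : ∀ x, 0 < F x) :
    ∫ x, (F x / powerMean μ t F) ^ t ∂μ = 1 := by
  have hI := integral_rpow_pos (μ := μ) hF hF0 t
  simp_rw [div_rpow (hF0 _).le (powerMean_pos hF hF0).le, integral_div]
  rw [powerMean, rpow_inv_rpow hI.le ht, div_self hI.ne']

theorem integral_rpow_add_le_and_eq_iff (ht : t < 0) (hF : Continuous F) (hF0 : ∀ x, 0 < F x)
    (hG : Continuous G) (hG0 : ∀ x, 0 < G x) :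
    ∫ x, (F x + G x) ^ t ∂μ ≤ (powerMean μ t F + powerMean μ t G) ^ t ∧
      (∫ x, (F x + G x) ^ t ∂μ = (powerMean μ t F + powerMean μ t G) ^ t ↔
        ∀ x, F x / powerMean μ t F = G x / powerMean μ t G) := by
  set a := powerMean μ t F
  set b := powerMean μ t G
  have ha : 0 < a := powerMean_pos hF hF0
  have hb : 0 < b := powerMean_pos hG hG0
  have hab : 0 < a + b := add_pos ha hb
  have hpt x := rpow_add_div_add_le_and_eq_iff ht ha hb (hF0 x) (hG0 x)
  have hsumt : Continuous fun x ↦ ((F x + G x) / (a + b)) ^ t :=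
    ((hF.add hG).div_const _).rpow_const fun x ↦ Or.inl (div_pos (add_pos (hF0 x) (hG0 x)) hab).ne'
  have hFt : Continuous fun x ↦ (F x / a) ^ t :=
    (hF.div_const _).rpow_const fun x ↦ Or.inl (div_pos (hF0 x) ha).ne'
  have hGt : Continuous fun x ↦ (G x / b) ^ t :=
    (hG.div_const _).rpow_const fun x ↦ Or.inl (div_pos (hG0 x) hb).ne'
  have hconv : Continuous fun x ↦ a / (a + b) * (F x / a) ^ t + b / (a + b) * (G x / b) ^ t :=
    (continuous_const.mul hFt).add (continuous_const.mul hGt)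
  have hlhs : ∫ x, ((F x + G x) / (a + b)) ^ t ∂μ = (∫ x, (F x + G x) ^ t ∂μ) / (a + b) ^ t := by
    simp_rw [div_rpow (add_pos (hF0 _) (hG0 _)).le hab.le]
    exact integral_div _ _
  have hrhs : ∫ x, (a / (a + b) * (F x / a) ^ t + b / (a + b) * (G x / b) ^ t) ∂μ = 1 := by
    rw [integral_add (hFt.integrable_of_compactSpace.const_mul _)
        (hGt.integrable_of_compactSpace.const_mul _),
      integral_const_mul, integral_const_mul, integral_div_powerMean_rpow ht.ne hF hF0,
      integral_div_powerMean_rpow ht.ne hG hG0, mul_one, mul_one, ← add_div,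
      div_self hab.ne']
  have habt : 0 < (a + b) ^ t := rpow_pos_of_pos hab t
  constructor
  · have := integral_mono (μ := μ) hsumt.integrable_of_compactSpace
      hconv.integrable_of_compactSpace fun x ↦ (hpt x).1
    rwa [hlhs, hrhs, div_le_one habt] at this
  · have := hsumt.integral_eq_integral_iff_of_le hconv (μ := μ) fun x ↦ (hpt x).1
    rw [hlhs, hrhs, div_eq_one_iff_eq habt.ne', funext_iff] at this
    exact this.trans (forall_congr' fun x ↦ (hpt x).2)

theorem le_powerMean_add (ht : t < 0) (hF : Continuous F) (hF0 : ∀ x, 0 < F x)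
    (hG : Continuous G) (hG0 : ∀ x, 0 < G x) :
    powerMean μ t F + powerMean μ t G ≤ powerMean μ t (F + G) := by
  have hab : 0 < powerMean μ t F + powerMean μ t G :=
    add_pos (powerMean_pos hF hF0) (powerMean_pos hG hG0)
  calc powerMean μ t F + powerMean μ t G
      = ((powerMean μ t F + powerMean μ t G) ^ t) ^ t⁻¹ := (rpow_rpow_inv hab.le ht.ne).symm
    _ ≤ (∫ x, (F x + G x) ^ t ∂μ) ^ t⁻¹ :=
        rpow_le_rpow_of_nonpos (integral_rpow_pos (hF.add hG) (fun x ↦ add_pos (hF0 x) (hG0 x)) t)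
          (integral_rpow_add_le_and_eq_iff ht hF hF0 hG hG0).1 (inv_nonpos.2 ht.le)

theorem powerMean_add_eq_iff (ht : t < 0) (hF : Continuous F) (hF0 : ∀ x, 0 < F x)
    (hG : Continuous G) (hG0 : ∀ x, 0 < G x) :
    powerMean μ t (F + G) = powerMean μ t F + powerMean μ t G ↔
      ∃ c > 0, ∀ x, F x = c * G x := by
  have ha := powerMean_pos (μ := μ) (t := t) hF hF0
  have hb := powerMean_pos (μ := μ) (t := t) hG hG0
  have hI := integral_rpow_pos (μ := μ) (hF.add hG) (fun x ↦ add_pos (hF0 x) (hG0 x)) t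
  rw [powerMean, rpow_inv_eq hI.le (add_pos ha hb).le ht.ne]
  refine (integral_rpow_add_le_and_eq_iff ht hF hF0 hG hG0).2.trans ⟨fun h ↦ ?_, ?_⟩
  · refine ⟨powerMean μ t F / powerMean μ t G, div_pos ha hb, fun x ↦ ?_⟩
    rw [div_mul_comm, ← h x, div_mul_cancel₀ _ ha.ne']
  · rintro ⟨c, hc, hFG⟩ x
    have hFc : F = fun x ↦ c * G x := funext hFG
    rw [hFc, powerMean_const_mul μ ht.ne (fun x ↦ (hG0 x).le) hc.le, mul_div_mul_left _ _ hc.ne']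

end PowerMean

instance (n : ℕ) : IsFiniteMeasure (sphereMeasure n) :=
  inferInstanceAs (IsFiniteMeasure (volume : Measure (EuclideanSpace ℝ (Fin n))).toSphere)

instance (n : ℕ) : (sphereMeasure n).IsOpenPosMeasure :=
  inferInstanceAs (volume : Measure (EuclideanSpace ℝ (Fin n))).toSphere.IsOpenPosMeasure

theorem nonempty_sphere_of_pos {n : ℕ} (hn : 0 < n) :
    Nonempty (sphere (0 : EuclideanSpace ℝ (Fin n)) 1) := by
  have : Nonempty (Fin n) := ⟨⟨0, hn⟩⟩
  exact (NormedSpace.sphere_nonempty.2 zero_le_one).to_subtype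

namespace StarBody

variable {n : ℕ}

theorem continuous_chord (K : StarBody n) : Continuous K.chord :=
  (K.radial_continuous.add (K.radial_continuous.comp continuous_neg)).div_const 2

theorem chord_pos (K : StarBody n) (u : sphere (0 : EuclideanSpace ℝ (Fin n)) 1) :
    0 < K.chord u :=
  half_pos (add_pos (K.radial_pos u) (K.radial_pos (-u)))

end StarBody

theorem similarChord_iff_exists_rpow {n : ℕ} {K L : StarBody n} {s : ℝ} (hs : s ≠ 0) :
    SimilarChord K L ↔ ∃ c > 0, ∀ u, K.chord u ^ s = c * L.chord u ^ s := by
  constructor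
  · rintro ⟨c, hc, hKL⟩
    exact ⟨c ^ s, rpow_pos_of_pos hc s, fun u ↦ by rw [hKL u, mul_rpow hc.le (L.chord_pos u).le]⟩
  · rintro ⟨c, hc, hKL⟩
    refine ⟨c ^ s⁻¹, rpow_pos_of_pos hc _, fun u ↦ ?_⟩
    rw [← rpow_rpow_inv (K.chord_pos u).le hs, hKL u,
      mul_rpow hc.le (rpow_nonneg (L.chord_pos u).le s), rpow_rpow_inv (L.chord_pos u).le hs]

theorem chordIntegral_zero_rpow_eq_mul_powerMean {n : ℕ} (K : StarBody n) {p : ℝ} (hp : p ≠ 0) :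
    chordIntegral n 0 K ^ (-p / n) =
      (1 / n : ℝ) ^ (-p / n) * powerMean (sphereMeasure n) (-n / p) (fun u ↦ K.chord u ^ (-p)) := by
  have hpow u : (K.chord u ^ (-p)) ^ (-n / p : ℝ) = K.chord u ^ (n : ℝ) := by
    rw [← rpow_mul (K.chord_pos u).le]
    congr 1
    field_simp
  rw [chordIntegral, powerMean, Nat.cast_zero, sub_zero,
    mul_rpow (by positivity) (integral_nonneg fun u ↦ rpow_nonneg (K.chord_pos u).le _)]
  simp only [hpow]
  rw [inv_div, div_neg, neg_div]

/-- `L_p`-Brunn–Minkowski inequality for the chord integral (`i = 0`):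
`B(K +̌_p L)^{-p/n} ≥ B(K)^{-p/n} + B(L)^{-p/n}`, with equality iff `K` and `L` have
similar chord. -/
theorem lp_brunn_minkowski_chordIntegral_zero {n : ℕ} (hn : 0 < n) {p : ℝ} (hp : 1 ≤ p)
    (K L KL : StarBody n)
    (hKL : ∀ u, KL.chord u ^ (-p) = K.chord u ^ (-p) + L.chord u ^ (-p)) :
    chordIntegral n 0 KL ^ (-p / (n : ℝ)) ≥
      chordIntegral n 0 K ^ (-p / (n : ℝ)) + chordIntegral n 0 L ^ (-p / (n : ℝ)) ∧
    (chordIntegral n 0 KL ^ (-p / (n : ℝ)) =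
        chordIntegral n 0 K ^ (-p / (n : ℝ)) + chordIntegral n 0 L ^ (-p / (n : ℝ)) ↔
      SimilarChord K L) := by
  have hp0 : 0 < p := by linarith
  have ht : -(n : ℝ) / p < 0 := div_neg_of_neg_of_pos (neg_neg_of_pos (Nat.cast_pos.2 hn)) hp0
  have := nonempty_sphere_of_pos hn
  have hcont (M : StarBody n) : Continuous fun u ↦ M.chord u ^ (-p) :=
    M.continuous_chord.rpow_const fun u ↦ Or.inl (M.chord_pos u).ne'
  have hpos (M : StarBody n) u : 0 < M.chord u ^ (-p) := rpow_pos_of_pos (M.chord_pos u) _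
  have hsum : (fun u ↦ KL.chord u ^ (-p)) = (fun u ↦ K.chord u ^ (-p)) + fun u ↦ L.chord u ^ (-p) :=
    funext hKL
  have hc : 0 < (1 / n : ℝ) ^ (-p / n) := by positivity
  simp only [chordIntegral_zero_rpow_eq_mul_powerMean _ hp0.ne', hsum, ← mul_add, ge_iff_le,
    mul_le_mul_iff_right₀ hc, mul_right_inj' hc.ne']
  exact ⟨le_powerMean_add ht (hcont K) (hpos K) (hcont L) (hpos L),
    (powerMean_add_eq_iff ht (hcont K) (hpos K) (hcont L) (hpos L)).trans
      (similarChord_iff_exists_rpow (neg_ne_zero.2 hp0.ne')).symm⟩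
end
end

section
/- Pointwise first variation: let φ₁, φ₂ ∈ Φ and for ε > 0 let K +̌_φ ε·L be defined by φ₁(d(K,u)/λ) + ε φ₂(d(L,u)/λ) = 1. Then for each u ∈ S^{n-1} and 0 ≤ i < n, d/dε |_{ε=0⁺} d(K +̌_φ ε·L, u)^{n-i} = ((n−i)/(φ₁)'_r(1)) · φ₂(d(L,u)/d(K,u)) · d(K,u)^{n-i}. -/
/-!
Fix `u` and write `t ε = d(K,u) / d(M ε,u)`. The defining equation reads
`φ₁(t) = 1 - ε φ₂(d(L,u) / d(M ε,u))`, so `t > 1` and `φ₁(t) → 1`; comparing secant slopes of the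
convex `φ₁` through `1` and `2` forces `t → 1⁺`, hence `d(M ε,u) → d(K,u)`. Rewriting the equation
as `slope φ₁ 1 t * (t - 1) = -ε φ₂(…)` expresses the difference quotient of `d(M ·,u)` at `0` through
that slope, which tends to `(φ₁)'_r(1)`; the exponent `n - i` then comes from the chain rule.
-/

open MeasureTheory Metric Filter Set

noncomputable section

/-- The class `Φ`: convex, strictly decreasing `φ : [0,∞) → (0,∞]` with `φ(0) = ∞`
(encoded as a blow-up at `0⁺`), `φ(∞) = 0` and `φ(1) = 1`. -/
structure OrliczPhi where
  toFun : ℝ → ℝ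
  pos : ∀ x > (0 : ℝ), 0 < toFun x
  convexOn : ConvexOn ℝ (Set.Ioi 0) toFun
  strictAnti : StrictAntiOn toFun (Set.Ioi 0)
  tendsto_zero : Tendsto toFun (nhdsWithin 0 (Set.Ioi 0)) atTop
  tendsto_atTop : Tendsto toFun atTop (nhds 0)
  map_one : toFun 1 = 1

open Topology

namespace OrliczPhi

variable (φ : OrliczPhi)

theorem lt_one_of_one_lt {x : ℝ} (hx : 1 < x) : φ.toFun x < 1 := by
  have := φ.strictAnti (mem_Ioi.2 one_pos) (mem_Ioi.2 (one_pos.trans hx)) hx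
  rwa [φ.map_one] at this

theorem one_lt_of_lt_one {x : ℝ} (hx : 0 < x) (h : φ.toFun x < 1) : 1 < x := by
  by_contra! hx1
  have := φ.strictAnti.antitoneOn hx (mem_Ioi.2 one_pos) hx1
  rw [φ.map_one] at this
  linarith

theorem continuousOn : ContinuousOn φ.toFun (Ioi 0) := by
  simpa using φ.convexOn.continuousOn_interior

/-- The secant slope of the convex `φ` on `[1, t]` is at most the one on `[1, 2]`. -/
theorem mul_sub_one_le {t : ℝ} (ht : 1 < t) (h2 : φ.toFun 2 < φ.toFun t) :
    (1 - φ.toFun 2) * (t - 1) ≤ 1 - φ.toFun t := by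
  have ht2 : t < 2 := by
    by_contra! h
    exact (φ.strictAnti.antitoneOn (mem_Ioi.2 two_pos) (mem_Ioi.2 (by linarith)) h).not_gt h2
  have hsec := φ.convexOn.secant_mono (a := 1) (mem_Ioi.2 one_pos) (mem_Ioi.2 (by linarith))
    (mem_Ioi.2 two_pos) ht.ne' (by norm_num) ht2.le
  rw [φ.map_one, div_le_div_iff₀ (by linarith) (by norm_num)] at hsec
  linarith

theorem tendsto_nhdsGT_one {α : Type*} {l : Filter α} {g : α → ℝ} (hg : ∀ᶠ x in l, 1 < g x)
    (h : Tendsto (fun x => φ.toFun (g x)) l (𝓝 1)) : Tendsto g l (𝓝[>] 1) := by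
  have hφ2 := φ.lt_one_of_one_lt one_lt_two
  have hδ : 0 < 1 - φ.toFun 2 := sub_pos.2 hφ2
  have hup : Tendsto (fun x => 1 + (1 - φ.toFun (g x)) / (1 - φ.toFun 2)) l (𝓝 1) := by
    simpa using ((h.const_sub 1).div_const _).const_add 1
  refine tendsto_nhdsWithin_iff.2 ⟨?_, hg⟩
  refine tendsto_of_tendsto_of_tendsto_of_le_of_le' tendsto_const_nhds hup ?_ ?_
  · filter_upwards [hg] with x hx using hx.le
  · filter_upwards [hg, h.eventually (lt_mem_nhds hφ2)] with x hx hx2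
    rw [← sub_le_iff_le_add', le_div_iff₀ hδ]
    linarith [φ.mul_sub_one_le hx hx2]

end OrliczPhi

theorem StarBody.chord_pos_s11 {n : ℕ} (K : StarBody n) (u : sphere (0 : EuclideanSpace ℝ (Fin n)) 1) :
    0 < K.chord u :=
  half_pos (add_pos (K.radial_pos u) (K.radial_pos (-u)))

section OrliczEquation

variable {φ₁ φ₂ : OrliczPhi} {a b : ℝ} {f : ℝ → ℝ}

theorem one_lt_div_of_orlicz_eq (ha : 0 < a) (hb : 0 < b) (hf : ∀ ε > 0, 0 < f ε)
    (heq : ∀ ε > (0 : ℝ), φ₁.toFun (a / f ε) + ε * φ₂.toFun (b / f ε) = 1)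
    {ε : ℝ} (hε : 0 < ε) : 1 < a / f ε :=
  φ₁.one_lt_of_lt_one (div_pos ha (hf ε hε))
    (by linarith [heq ε hε, mul_pos hε (φ₂.pos _ (div_pos hb (hf ε hε)))])

theorem tendsto_div_nhdsGT_one_of_orlicz_eq (ha : 0 < a) (hb : 0 < b) (hf : ∀ ε > 0, 0 < f ε)
    (heq : ∀ ε > (0 : ℝ), φ₁.toFun (a / f ε) + ε * φ₂.toFun (b / f ε) = 1) :
    Tendsto (fun ε => a / f ε) (𝓝[>] 0) (𝓝[>] 1) := by
  have hlt : ∀ ε > 0, f ε < a := fun ε hε =>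
    (one_lt_div (hf ε hε)).1 (one_lt_div_of_orlicz_eq ha hb hf heq hε)
  have hsmall : Tendsto (fun ε => ε * φ₂.toFun (b / f ε)) (𝓝[>] 0) (𝓝 0) := by
    have hbound : Tendsto (fun ε : ℝ => ε * φ₂.toFun (b / a)) (𝓝[>] 0) (𝓝 0) := by
      simpa using ((tendsto_id (x := 𝓝 (0 : ℝ))).mul_const _).mono_left nhdsWithin_le_nhds
    refine squeeze_zero' ?_ ?_ hbound
    · filter_upwards [self_mem_nhdsWithin] with ε hε
      exact mul_nonneg (le_of_lt hε) (φ₂.pos _ (div_pos hb (hf ε hε))).le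
    · filter_upwards [self_mem_nhdsWithin] with ε hε
      refine mul_le_mul_of_nonneg_left (φ₂.strictAnti.antitoneOn (div_pos hb ha)
        (div_pos hb (hf ε hε)) ?_) (le_of_lt hε)
      exact div_le_div_of_nonneg_left hb.le (hf ε hε) (hlt ε hε).le
  refine φ₁.tendsto_nhdsGT_one
    (eventually_nhdsWithin_of_forall fun ε hε => one_lt_div_of_orlicz_eq ha hb hf heq hε) ?_
  refine Tendsto.congr' ?_ (by simpa using hsmall.const_sub 1)
  filter_upwards [self_mem_nhdsWithin] with ε hε
  linarith [heq ε hε]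

theorem tendsto_of_orlicz_eq (ha : 0 < a) (hb : 0 < b) (hf : ∀ ε > 0, 0 < f ε)
    (heq : ∀ ε > (0 : ℝ), φ₁.toFun (a / f ε) + ε * φ₂.toFun (b / f ε) = 1) :
    Tendsto f (𝓝[>] 0) (𝓝 a) := by
  have h := (tendsto_div_nhdsGT_one_of_orlicz_eq ha hb hf heq).mono_right nhdsWithin_le_nhds
  refine Tendsto.congr' ?_ (by simpa using tendsto_const_nhds.div h one_ne_zero)
  filter_upwards [self_mem_nhdsWithin] with ε hε
  exact div_div_cancel₀ ha.ne'

theorem hasDerivWithinAt_of_orlicz_eq (ha : 0 < a) (hb : 0 < b) (hf : ∀ ε > 0, 0 < f ε)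
    (heq : ∀ ε > (0 : ℝ), φ₁.toFun (a / f ε) + ε * φ₂.toFun (b / f ε) = 1) (hf0 : f 0 = a)
    {d : ℝ} (hd : HasDerivWithinAt φ₁.toFun d (Ici 1) 1) (hd0 : d ≠ 0) :
    HasDerivWithinAt f (a * φ₂.toFun (b / a) / d) (Ioi 0) 0 := by
  have ht := tendsto_div_nhdsGT_one_of_orlicz_eq ha hb hf heq
  have hslope : Tendsto (fun ε => slope φ₁.toFun 1 (a / f ε)) (𝓝[>] 0) (𝓝 d) := by
    have h := hasDerivWithinAt_iff_tendsto_slope.1 hd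
    rw [Ici_sdiff_left] at h
    exact h.comp ht
  have hφ₂ : Tendsto (fun ε => φ₂.toFun (b / f ε)) (𝓝[>] 0) (𝓝 (φ₂.toFun (b / a))) :=
    (φ₂.continuousOn.continuousAt (Ioi_mem_nhds (div_pos hb ha))).tendsto.comp
      (tendsto_const_nhds.div (tendsto_of_orlicz_eq ha hb hf heq) ha.ne')
  have hlim := (tendsto_const_nhds (x := a)).mul hφ₂ |>.div
    (hslope.mul (ht.mono_right nhdsWithin_le_nhds)) (by simpa using hd0)
  rw [hasDerivWithinAt_iff_tendsto_slope' self_notMem_Ioi]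
  refine Tendsto.congr' ?_ (by simpa using hlim)
  filter_upwards [self_mem_nhdsWithin] with ε (hε : 0 < ε)
  have hfε := hf ε hε
  have ht1 := one_lt_div_of_orlicz_eq ha hb hf heq hε
  have hdrop : slope φ₁.toFun 1 (a / f ε) * (a / f ε - 1) = -(ε * φ₂.toFun (b / f ε)) := by
    rw [slope_def_field, φ₁.map_one, div_mul_cancel₀ _ (sub_ne_zero.2 ht1.ne')]
    linarith [heq ε hε]
  have hs : slope φ₁.toFun 1 (a / f ε) ≠ 0 := by
    rintro hs
    rw [hs, zero_mul] at hdrop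
    linarith [mul_pos hε (φ₂.pos _ (div_pos hb hfε))]
  simp only [Pi.div_apply]
  rw [slope_def_field f, hf0, sub_zero]
  field_simp
  field_simp at hdrop
  linear_combination hdrop

end OrliczEquation

theorem chord_pow_first_variation_general {n i : ℕ} (φ₁ φ₂ : OrliczPhi)
    (K L : StarBody n) (M : ℝ → StarBody n) (hM0 : M 0 = K)
    (hM : ∀ ε > (0 : ℝ), ∀ u,
      φ₁.toFun (K.chord u / (M ε).chord u) + ε * φ₂.toFun (L.chord u / (M ε).chord u) = 1)
    (dr : ℝ) (hd : HasDerivWithinAt φ₁.toFun dr (Set.Ici 1) 1) (hdr : dr ≠ 0)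
    (u : sphere (0 : EuclideanSpace ℝ (Fin n)) 1) :
    HasDerivWithinAt (fun ε => (M ε).chord u ^ ((n : ℝ) - i))
      ((((n : ℝ) - i) / dr) * φ₂.toFun (L.chord u / K.chord u) * K.chord u ^ ((n : ℝ) - i))
      (Set.Ioi 0) 0 := by
  have hK := K.chord_pos_s11 u
  have hchord : HasDerivWithinAt (fun ε => (M ε).chord u)
      (K.chord u * φ₂.toFun (L.chord u / K.chord u) / dr) (Ioi 0) 0 :=
    hasDerivWithinAt_of_orlicz_eq hK (L.chord_pos_s11 u) (fun ε _ => (M ε).chord_pos_s11 u)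
      (fun ε hε => hM ε hε u) (by rw [hM0]) hd hdr
  convert hchord.rpow_const (p := (n : ℝ) - i) (Or.inl (by rw [hM0]; exact hK.ne')) using 1
  rw [hM0, Real.rpow_sub_one hK.ne']
  field_simp

/-- Pointwise first variation: for each `u`,
`d/dε|_{ε=0⁺} d(K +̌_φ ε·L, u)^{n−i}
  = ((n−i)/(φ₁)'_r(1)) φ₂(d(L,u)/d(K,u)) d(K,u)^{n−i}`. -/
theorem chord_pow_first_variation {n i : ℕ} (hi : i < n) (φ₁ φ₂ : OrliczPhi)
    (K L : StarBody n) (M : ℝ → StarBody n) (hM0 : M 0 = K)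
    (hM : ∀ ε > (0 : ℝ), ∀ u,
      φ₁.toFun (K.chord u / (M ε).chord u) + ε * φ₂.toFun (L.chord u / (M ε).chord u) = 1)
    (dr : ℝ) (hd : HasDerivWithinAt φ₁.toFun dr (Set.Ici 1) 1) (hdr : dr ≠ 0)
    (u : sphere (0 : EuclideanSpace ℝ (Fin n)) 1) :
    HasDerivWithinAt (fun ε => (M ε).chord u ^ ((n : ℝ) - i))
      ((((n : ℝ) - i) / dr) * φ₂.toFun (L.chord u / K.chord u) * K.chord u ^ ((n : ℝ) - i))
      (Set.Ioi 0) 0 :=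
  chord_pow_first_variation_general φ₁ φ₂ K L M hM0 hM dr hd hdr u
end
end
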